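/- Let u be a fundamental piece for parameters n ≥ 1 and h > 0, and let Σ(u) = ⋃_{g ∈ G} g·K(u) be the associated helicoidal-Scherk example. Then the closure of Σ(u) in 𝔻 × ℝ equals Σ(u) ∪ ⋃_{g ∈ G} g·(γ_α × ℝ); that is, the closure of the helicoidal-Scherk example is the union of the surface with the totally geodesic vertical planes over the G-orbit of the ideal geodesic γ_α. -/

import Mathlib

open Complex Filter Topology Set

noncomputable section

/-- Conformal factor of the Poincaré disk metric: `λ(z) = 2/(1-|z|²)`. -/
def lam (z : ℂ) : ℝ := 2 / (1 - ‖z‖ ^ 2)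

/-- Euclidean gradient of `u : ℂ → ℝ`, viewed as a vector in `ℂ ≅ ℝ²`. -/
def egrad (u : ℂ → ℝ) (z : ℂ) : ℂ :=
  ⟨fderiv ℝ u z 1, fderiv ℝ u z Complex.I⟩

/-- Euclidean divergence of a vector field on `ℂ ≅ ℝ²`. -/
def ediv (V : ℂ → ℂ) (z : ℂ) : ℝ :=
  (fderiv ℝ V z 1).re + (fderiv ℝ V z Complex.I).im

/-- The vector field `λ∇u/√(λ² + |∇u|²)`. -/
def minVF (u : ℂ → ℝ) (z : ℂ) : ℂ :=
  (lam z / Real.sqrt ((lam z) ^ 2 + Complex.normSq (egrad u z))) • egrad u z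

/-- `u` is a (smooth) minimal graph on `Ω`. -/
def IsMinimalGraph (Ω : Set ℂ) (u : ℂ → ℝ) : Prop :=
  ContDiffOn ℝ (⊤ : ℕ∞) u Ω ∧ ∀ z ∈ Ω, ediv (minVF u) z = 0

/-- `α = π/(2n)`. -/
def alphaN (n : ℕ) : ℝ := Real.pi / (2 * n)

/-- Center `c_α = 1 + i·tan(α/2)`. -/
def cA (n : ℕ) : ℂ := 1 + Complex.I * (Real.tan (alphaN n / 2) : ℝ)

/-- The ideal geodesic triangle `Ω` with vertices `0`, `1`, `e^{iα}`. -/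
def OmegaN (n : ℕ) : Set ℂ :=
  {z | ‖z‖ < 1 ∧ 0 < z.arg ∧ z.arg < alphaN n ∧
    Real.tan (alphaN n / 2) < ‖z - cA n‖}

/-- The ideal geodesic `γ_α` joining `1` and `e^{iα}`. -/
def gammaN (n : ℕ) : Set ℂ :=
  {z | ‖z‖ < 1 ∧ ‖z - cA n‖ = Real.tan (alphaN n / 2)}

/-- A fundamental piece for parameters `n`, `h`. -/
def FundamentalPiece (n : ℕ) (h : ℝ) (u : ℂ → ℝ) : Prop :=
  IsMinimalGraph (OmegaN n) u ∧
  (∀ x : ℝ, 0 < x → x < 1 → Tendsto u (𝓝[OmegaN n] (x : ℂ)) (𝓝 0)) ∧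
  (∀ x : ℝ, 0 < x → x < 1 →
    Tendsto u (𝓝[OmegaN n] ((x : ℂ) * Complex.exp (alphaN n * Complex.I))) (𝓝 h)) ∧
  (∀ ζ ∈ gammaN n, Tendsto u (𝓝[OmegaN n] ζ) atTop)

/-- The model `𝔻 × ℝ` of `ℍ² × ℝ` inside `ℂ × ℝ`. -/
def DR : Set (ℂ × ℝ) := {p | ‖p.1‖ < 1}

/-- The three generating isometries, as a set of bijections of `ℂ × ℝ`:
`σ₁(z,t) = (conj z, −t)`, `σ₂(z,t) = (e^{2iα}·conj z, 2h − t)`, `σ₃(z,t) = (−z, t)`. -/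
def genSet (α h : ℝ) : Set (Equiv.Perm (ℂ × ℝ)) :=
  {g | ⇑g = (fun p : ℂ × ℝ => ((starRingEnd ℂ) p.1, -p.2)) ∨
       ⇑g = (fun p : ℂ × ℝ =>
          (Complex.exp (2 * α * Complex.I) * (starRingEnd ℂ) p.1, 2 * h - p.2)) ∨
       ⇑g = (fun p : ℂ × ℝ => (-p.1, p.2))}

/-- The symmetry group `G` generated by `σ₁`, `σ₂`, `σ₃`. -/
def Ggrp (α h : ℝ) : Subgroup (Equiv.Perm (ℂ × ℝ)) := Subgroup.closure (genSet α h)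

/-- The open graph `Γ(u) = {(z, u(z)) : z ∈ Ω}`. -/
def graphSet (Ω : Set ℂ) (u : ℂ → ℝ) : Set (ℂ × ℝ) := {p | p.1 ∈ Ω ∧ p.2 = u p.1}

/-- `K(u)`: the closure of the graph of `u` in `𝔻 × ℝ`. -/
def Kset (n : ℕ) (u : ℂ → ℝ) : Set (ℂ × ℝ) := closure (graphSet (OmegaN n) u) ∩ DR

/-- The helicoidal-Scherk example `Σ(u) = ⋃_{g ∈ G} g·K(u)`. -/
def SigmaSet (n : ℕ) (h : ℝ) (u : ℂ → ℝ) : Set (ℂ × ℝ) :=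
  ⋃ g ∈ Ggrp (alphaN n) h, ⇑g '' Kset n u

/-- The vertical plane `γ_α × ℝ` over the ideal geodesic `γ_α`. -/
def planeN (n : ℕ) : Set (ℂ × ℝ) := {p | p.1 ∈ gammaN n}

-- ===== Part 1: group structure =====

def cc (σ : Bool) (z : ℂ) : ℂ := if σ then (starRingEnd ℂ) z else z
def sg (e : Bool) : ℝ := if e then -1 else 1

def fmap (h : ℝ) (w : ℂ) (σ e : Bool) (m : ℤ) : ℂ × ℝ → ℂ × ℝ :=
  fun p => (w * cc σ p.1, sg e * p.2 + 2*h*m)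

lemma cc_cc (σ : Bool) (z : ℂ) : cc σ (cc σ z) = z := by cases σ <;> simp [cc]
lemma abs_cc (σ : Bool) (z : ℂ) : ‖cc σ z‖ = ‖z‖ := by
  cases σ
  · rfl
  · simp [cc]
lemma cc_cont (σ : Bool) : Continuous (cc σ) := by
  cases σ
  · exact continuous_id
  · exact continuous_conj
lemma sg_mul_sg (e : Bool) : sg e * sg e = 1 := by cases e <;> norm_num [sg]
lemma fmap_cont (h : ℝ) (w : ℂ) (σ e : Bool) (m : ℤ) : Continuous (fmap h w σ e m) := by
  apply Continuous.prodMk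
  · exact continuous_const.mul ((cc_cont σ).comp continuous_fst)
  · exact (continuous_const.mul continuous_snd).add continuous_const

lemma abs_one_of_pow {w : ℂ} {k : ℕ} (hk : k ≠ 0) (hw : w ^ k = 1) : ‖w‖ = 1 := by
  have h1 : ‖w‖ ^ k = 1 := by
    have := congrArg (‖·‖) hw; simpa [norm_pow] using this
  rcases lt_trichotomy (‖w‖) 1 with hlt | heq | hgt
  · exact absurd h1 (by nlinarith [pow_lt_one₀ (norm_nonneg w) hlt hk])
  · exact heq
  · exact absurd h1 (by nlinarith [one_lt_pow₀ hgt hk])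

lemma mul_conj_one {w : ℂ} {k : ℕ} (hk : k ≠ 0) (hw : w ^ k = 1) :
    w * (starRingEnd ℂ) w = 1 := by
  have := abs_one_of_pow hk hw
  rw [Complex.mul_conj]
  norm_cast
  rw [Complex.normSq_eq_norm_sq, this]; norm_num

/-- Structure theorem for elements of `Ggrp`. -/
lemma ggrp_form {n : ℕ} (hn : 1 ≤ n) (h : ℝ)
    {g : Equiv.Perm (ℂ × ℝ)} (hg : g ∈ Ggrp (alphaN n) h) :
    ∃ (w : ℂ) (σ e : Bool) (m : ℤ), w ^ (2*n) = 1 ∧ ⇑g = fmap h w σ e m := by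
  have h2n : (2*n : ℕ) ≠ 0 := by omega
  induction hg using Subgroup.closure_induction with
  | mem x hx =>
    rcases hx with hx | hx | hx
    · exact ⟨1, true, true, 0, by simp, by funext p; simp [hx, fmap, cc, sg]⟩
    · refine ⟨Complex.exp (2 * (alphaN n) * Complex.I), true, true, 1, ?_, ?_⟩
      · rw [← Complex.exp_nat_mul]
        have hn0 : (n:ℂ) ≠ 0 := Nat.cast_ne_zero.mpr (by omega)
        rw [show ((2*n : ℕ) : ℂ) * (2 * (alphaN n) * Complex.I)
            = 2 * Real.pi * Complex.I by
          have hA : ((alphaN n : ℝ) : ℂ) = (Real.pi : ℂ) / (2 * n) := by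
            rw [alphaN]; push_cast; ring
          rw [hA]; push_cast; field_simp]
        exact Complex.exp_two_pi_mul_I
      · funext p; simp [hx, fmap, cc, sg]; try ring
    · refine ⟨-1, false, false, 0, Even.neg_one_pow ⟨n, by ring⟩, ?_⟩
      funext p; simp [hx, fmap, cc, sg]
  | one => exact ⟨1, false, false, 0, by simp, by funext p; simp [fmap, cc, sg]⟩
  | mul x y hx hy ihx ihy =>
    obtain ⟨w1, σ1, e1, m1, hw1, hx1⟩ := ihx
    obtain ⟨w2, σ2, e2, m2, hw2, hy1⟩ := ihy
    refine ⟨w1 * cc σ1 w2, xor σ1 σ2, xor e1 e2, (if e1 then -m2 else m2) + m1, ?_, ?_⟩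
    · rw [mul_pow, hw1, one_mul]
      cases σ1 <;> simp [cc, ← map_pow, hw2]
    · funext p
      rw [Equiv.Perm.coe_mul]
      simp only [Function.comp_apply, hx1, hy1, fmap, Prod.mk.injEq]
      constructor
      · cases σ1 <;> cases σ2 <;> simp [cc, map_mul] <;> ring
      · cases e1 <;> cases e2 <;> simp [sg] <;> push_cast <;> ring
  | inv x hx ihx =>
    obtain ⟨w, σ, e, m, hw, hx1⟩ := ihx
    have hconj : w * (starRingEnd ℂ) w = 1 := mul_conj_one h2n hw
    refine ⟨if σ then w else (starRingEnd ℂ) w, σ, e, if e then m else -m, ?_, ?_⟩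
    · cases σ <;> simp [← map_pow, hw]
    · funext p
      have key : x (fmap h (if σ then w else (starRingEnd ℂ) w) σ e (if e then m else -m) p)
          = p := by
        rw [hx1]
        simp only [fmap]
        have hC : w * cc σ ((if σ then w else (starRingEnd ℂ) w) * cc σ p.1) = p.1 := by
          cases σ <;>
            simp only [cc, Bool.cond_true_left, if_true, if_false, map_mul,
              Complex.conj_conj] <;>
          · calc w * ((starRingEnd ℂ) w * p.1) = (w * (starRingEnd ℂ) w) * p.1 := by ring
              _ = p.1 := by rw [hconj]; ring
        have hR : sg e * (sg e * p.2 + 2*h*((if e then m else -m : ℤ) : ℝ)) + 2*h*(m:ℝ) = p.2 := by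
          cases e <;> simp [sg] <;> push_cast <;> ring
        calc (w * cc σ ((if σ then w else (starRingEnd ℂ) w) * cc σ p.1),
              sg e * (sg e * p.2 + 2*h*((if e then m else -m : ℤ) : ℝ)) + 2*h*(m:ℝ))
            = (p.1, p.2) := by rw [hC, hR]
          _ = p := rfl
      calc x⁻¹ p = x⁻¹ (x (fmap h (if σ then w else (starRingEnd ℂ) w) σ e
            (if e then m else -m) p)) := by rw [key]
        _ = _ := Equiv.symm_apply_apply x _

-- ===== Part 2: explicit group elements =====

def perm1 : Equiv.Perm (ℂ × ℝ) :=
  Function.Involutive.toPerm (fun p => ((starRingEnd ℂ) p.1, -p.2)) (by intro p; simp)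

def perm2 (α h : ℝ) : Equiv.Perm (ℂ × ℝ) :=
  Function.Involutive.toPerm
    (fun p => (Complex.exp (2 * α * Complex.I) * (starRingEnd ℂ) p.1, 2 * h - p.2))
    (by
      intro p
      obtain ⟨z, t⟩ := p
      simp only [map_mul, Prod.mk.injEq]
      constructor
      · rw [← Complex.exp_conj]
        have : (starRingEnd ℂ) (2 * (α:ℂ) * Complex.I) = -(2 * α * Complex.I) := by
          simp [map_mul, map_ofNat, Complex.conj_ofReal, Complex.conj_I]; try ring
        rw [this, Complex.conj_conj]
        rw [show Complex.exp (2*(α:ℂ)*Complex.I) * (Complex.exp (-(2*(α:ℂ)*Complex.I)) * z)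
            = (Complex.exp (2*(α:ℂ)*Complex.I) * Complex.exp (-(2*(α:ℂ)*Complex.I))) * z by ring]
        rw [← Complex.exp_add]; simp
      · ring)

def perm3 : Equiv.Perm (ℂ × ℝ) :=
  Function.Involutive.toPerm (fun p => (-p.1, p.2)) (by intro p; simp)

lemma perm1_mem (α h : ℝ) : perm1 ∈ Ggrp α h :=
  Subgroup.subset_closure (Or.inl (Function.Involutive.coe_toPerm _))

lemma perm2_mem (α h : ℝ) : perm2 α h ∈ Ggrp α h :=
  Subgroup.subset_closure (Or.inr (Or.inl (Function.Involutive.coe_toPerm _)))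

lemma perm3_mem (α h : ℝ) : perm3 ∈ Ggrp α h :=
  Subgroup.subset_closure (Or.inr (Or.inr (Function.Involutive.coe_toPerm _)))

def trP (c : ℝ) : Equiv.Perm (ℂ × ℝ) := Equiv.prodCongr (Equiv.refl ℂ) (Equiv.addRight c)

lemma trP_coe (c : ℝ) : ⇑(trP c) = fun p : ℂ × ℝ => (p.1, p.2 + c) := rfl

lemma trP_mul (c d : ℝ) : trP c * trP d = trP (d + c) := by
  apply Equiv.coe_fn_injective
  show ⇑(trP c * trP d) = ⇑(trP (d + c))
  rw [Equiv.Perm.coe_mul, trP_coe, trP_coe, trP_coe]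
  funext p; simp; ring

lemma pow21_coe (α h : ℝ) (j : ℕ) :
    ⇑((perm2 α h * perm1)^j) =
      fun p : ℂ × ℝ => (Complex.exp (2 * α * Complex.I)^j * p.1, p.2 + 2*h*j) := by
  induction j with
  | zero => funext p; simp
  | succ j ih =>
    rw [pow_succ']
    rw [Equiv.Perm.coe_mul, ih, Equiv.Perm.coe_mul]
    funext p
    simp only [Function.comp_apply, perm2, perm1, Function.Involutive.toPerm, Equiv.coe_fn_mk, Prod.mk.injEq]
    constructor
    · simp [map_mul, pow_succ]; ring
    · push_cast; ring

lemma trP_base_mem {n : ℕ} (hn : 1 ≤ n) (h : ℝ) : trP (2*h*n) ∈ Ggrp (alphaN n) h := by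
  have key : trP (2*h*n) = perm3 * (perm2 (alphaN n) h * perm1)^n := by
    apply Equiv.coe_fn_injective
    show ⇑(trP (2*h*n)) = ⇑(perm3 * (perm2 (alphaN n) h * perm1)^n)
    rw [Equiv.Perm.coe_mul, pow21_coe, trP_coe]
    have hexp : Complex.exp (2 * (alphaN n) * Complex.I)^n = -1 := by
      rw [← Complex.exp_nat_mul]
      have hn0 : (n:ℂ) ≠ 0 := Nat.cast_ne_zero.mpr (by omega)
      rw [show ((n:ℂ)) * (2 * (alphaN n) * Complex.I) = Real.pi * Complex.I by
        have hA : ((alphaN n : ℝ) : ℂ) = (Real.pi : ℂ) / (2 * n) := by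
          rw [alphaN]; push_cast; ring
        rw [hA]; field_simp]
      exact Complex.exp_pi_mul_I
    funext p
    simp [hexp, perm3, Function.Involutive.toPerm]
  rw [key]
  exact Subgroup.mul_mem _ (perm3_mem _ _)
    (Subgroup.pow_mem _ (Subgroup.mul_mem _ (perm2_mem _ _) (perm1_mem _ _)) n)

lemma trP_neg_mem {n : ℕ} (hn : 1 ≤ n) (h : ℝ) : trP (-(2*h*n)) ∈ Ggrp (alphaN n) h := by
  have hinv : (trP (2*h*(n:ℝ)))⁻¹ = trP (-(2*h*n)) := by
    apply inv_eq_of_mul_eq_one_right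
    rw [trP_mul]
    apply Equiv.coe_fn_injective
    show ⇑(trP (-(2*h*↑n) + 2*h*↑n)) = ⇑(1 : Equiv.Perm (ℂ × ℝ))
    funext p; simp [trP_coe]
  rw [← hinv]
  exact Subgroup.inv_mem _ (trP_base_mem hn h)

lemma trP_mem {n : ℕ} (hn : 1 ≤ n) (h : ℝ) (k : ℤ) : trP (2*h*n*k) ∈ Ggrp (alphaN n) h := by
  induction k using Int.induction_on with
  | zero =>
    have h0 : trP (2*h*(n:ℝ)*((0:ℤ):ℝ)) = 1 := by
      apply Equiv.coe_fn_injective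
      show ⇑(trP (2*h*(n:ℝ)*((0:ℤ):ℝ))) = ⇑(1 : Equiv.Perm (ℂ × ℝ))
      funext p; simp [trP_coe]
    rw [h0]; exact Subgroup.one_mem _
  | succ k ih =>
    push_cast
    push_cast at ih
    rw [show 2*h*(n:ℝ)*((k:ℝ)+1) = 2*h*(n:ℝ)*(k:ℝ) + 2*h*(n:ℝ) by ring, ← trP_mul]
    exact Subgroup.mul_mem _ (trP_base_mem hn h) ih
  | pred k ih =>
    push_cast
    push_cast at ih
    rw [show 2*h*(n:ℝ)*(-(k:ℝ)-1) = 2*h*(n:ℝ)*(-(k:ℝ)) + -(2*h*(n:ℝ)) by ring, ← trP_mul]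
    exact Subgroup.mul_mem _ (trP_neg_mem hn h) ih

-- ===== Part 3: geometry of the triangle =====

def eA (x : ℝ) : ℂ := Complex.exp ((x:ℂ) * Complex.I)

lemma eA_im (x : ℝ) : (eA x).im = Real.sin x := Complex.exp_ofReal_mul_I_im x
lemma eA_re (x : ℝ) : (eA x).re = Real.cos x := Complex.exp_ofReal_mul_I_re x
lemma abs_eA (x : ℝ) : ‖eA x‖ = 1 := Complex.norm_exp_ofReal_mul_I x
lemma eA_mul (x y : ℝ) : eA x * eA y = eA (x + y) := by
  rw [eA, eA, eA, ← Complex.exp_add]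
  congr 1
  push_cast
  try ring

lemma eA_ofReal (x : ℝ) : eA x = ((Real.cos x : ℝ) : ℂ) + ((Real.sin x : ℝ) : ℂ) * Complex.I := by
  rw [eA, Complex.exp_mul_I, ← Complex.ofReal_cos, ← Complex.ofReal_sin]

lemma cA_re (n : ℕ) : (cA n).re = 1 := by
  rw [cA]
  simp only [Complex.add_re, Complex.one_re, Complex.mul_re, Complex.I_re, Complex.I_im,
    Complex.ofReal_re, Complex.ofReal_im]
  ring

lemma cA_im (n : ℕ) : (cA n).im = Real.tan (alphaN n / 2) := by
  rw [cA]
  simp only [Complex.add_im, Complex.one_im, Complex.mul_im, Complex.I_re, Complex.I_im,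
    Complex.ofReal_re, Complex.ofReal_im]
  ring
lemma eA_zero : eA 0 = 1 := by simp [eA]
lemma conj_eA (x : ℝ) : (starRingEnd ℂ) (eA x) = eA (-x) := by
  rw [eA, ← Complex.exp_conj]
  congr 1
  simp [map_mul, Complex.conj_ofReal, Complex.conj_I]
  try push_cast
  try ring

lemma alpha_pos {n : ℕ} (hn : 1 ≤ n) : 0 < alphaN n := by
  rw [alphaN]
  have : (0:ℝ) < n := by exact_mod_cast hn
  positivity

lemma alpha_le {n : ℕ} (hn : 1 ≤ n) : alphaN n ≤ Real.pi / 2 := by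
  rw [alphaN]
  have h1 : (1:ℝ) ≤ n := by exact_mod_cast hn
  rw [div_le_div_iff₀ (by linarith) (by norm_num)]
  nlinarith [Real.pi_pos]

lemma cos_half_pos {n : ℕ} (hn : 1 ≤ n) : 0 < Real.cos (alphaN n / 2) := by
  apply Real.cos_pos_of_mem_Ioo
  constructor
  · nlinarith [alpha_pos hn, Real.pi_pos]
  · nlinarith [alpha_pos hn, alpha_le hn, Real.pi_pos]

lemma tan_half_pos {n : ℕ} (hn : 1 ≤ n) : 0 < Real.tan (alphaN n / 2) := by
  apply Real.tan_pos_of_pos_of_lt_pi_div_two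
  · linarith [alpha_pos hn]
  · linarith [alpha_le hn, Real.pi_pos]

lemma sin_alpha_pos {n : ℕ} (hn : 1 ≤ n) : 0 < Real.sin (alphaN n) := by
  apply Real.sin_pos_of_pos_of_lt_pi (alpha_pos hn)
  linarith [alpha_le hn, Real.pi_pos]

lemma cA_eq {n : ℕ} (hn : 1 ≤ n) :
    cA n = eA (alphaN n / 2) / ((Real.cos (alphaN n / 2) : ℝ) : ℂ) := by
  have hc : ((Real.cos (alphaN n / 2) : ℝ) : ℂ) ≠ 0 := by
    exact_mod_cast Complex.ofReal_ne_zero.mpr (ne_of_gt (cos_half_pos hn))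
  set c : ℂ := ((Real.cos (alphaN n / 2) : ℝ) : ℂ) with hcdef
  set s : ℂ := ((Real.sin (alphaN n / 2) : ℝ) : ℂ) with hsdef
  rw [cA, eA_ofReal, Real.tan_eq_sin_div_cos, eq_div_iff hc, Complex.ofReal_div]
  have key : s / c * c = s := div_mul_cancel₀ _ hc
  calc (1 + Complex.I * (s / c)) * c = c + (s / c * c) * Complex.I := by ring
    _ = c + s * Complex.I := by rw [key]
lemma conj_cA {n : ℕ} (hn : 1 ≤ n) : eA (alphaN n) * (starRingEnd ℂ) (cA n) = cA n := by
  have hc : ((Real.cos (alphaN n / 2) : ℝ) : ℂ) ≠ 0 :=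
    Complex.ofReal_ne_zero.mpr (ne_of_gt (cos_half_pos hn))
  rw [cA_eq hn, map_div₀, conj_eA, Complex.conj_ofReal]
  rw [mul_div_assoc', eA_mul]
  congr 2
  ring

lemma abs_cA {n : ℕ} (hn : 1 ≤ n) :
    ‖cA n‖ = 1 / Real.cos (alphaN n / 2) := by
  rw [cA_eq hn, norm_div, abs_eA, Complex.norm_real, Real.norm_eq_abs,
    abs_of_pos (cos_half_pos hn)]

lemma sec_sub_tan_pos {n : ℕ} (hn : 1 ≤ n) :
    0 < 1 / Real.cos (alphaN n / 2) - Real.tan (alphaN n / 2) := by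
  have hc := cos_half_pos hn
  have hs2 : Real.sin (alphaN n / 2) ^ 2 + Real.cos (alphaN n / 2) ^ 2 = 1 :=
    Real.sin_sq_add_cos_sq _
  have hs1 : Real.sin (alphaN n / 2) < 1 := by nlinarith
  rw [Real.tan_eq_sin_div_cos, div_sub_div_same, lt_div_iff₀ hc]
  nlinarith

lemma im_mul_eA (z : ℂ) (x : ℝ) :
    (z * eA x).im = ‖z‖ * Real.sin (z.arg + x) := by
  conv_lhs => rw [← Complex.norm_mul_exp_arg_mul_I z]
  rw [mul_assoc]
  rw [show Complex.exp (↑z.arg * Complex.I) * eA x = eA (z.arg + x) by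
    rw [show Complex.exp (↑z.arg * Complex.I) = eA z.arg from rfl, eA_mul]]
  rw [show ((‖z‖ : ℝ) : ℂ) * eA (z.arg + x) = ((‖z‖ : ℝ) : ℂ) * eA (z.arg + x) from rfl]
  rw [Complex.mul_im]
  simp [eA_im]

/-- From the `im` description to the `arg` description. -/
lemma arg_of_im {n : ℕ} (hn : 1 ≤ n) {z : ℂ} (h1 : 0 < z.im)
    (h2 : (z * eA (-(alphaN n))).im < 0) : 0 < z.arg ∧ z.arg < alphaN n := by
  have hz : z ≠ 0 := by intro hz; rw [hz] at h1; simp at h1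
  have habs : 0 < ‖z‖ := norm_pos_iff.mpr hz
  have hsin : 0 < Real.sin z.arg := by
    rw [Complex.sin_arg z]
    exact div_pos h1 habs
  have harg1 : 0 < z.arg := by
    by_contra hc
    push_neg at hc
    have h3 : Real.sin (-z.arg) ≥ 0 := by
      apply Real.sin_nonneg_of_nonneg_of_le_pi (by linarith)
      linarith [Complex.neg_pi_lt_arg z]
    rw [Real.sin_neg] at h3
    linarith
  refine ⟨harg1, ?_⟩
  by_contra hc
  push_neg at hc
  have h4 : 0 ≤ Real.sin (z.arg + -(alphaN n)) := by
    apply Real.sin_nonneg_of_nonneg_of_le_pi (by linarith)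
    have := Complex.arg_le_pi z
    linarith [alpha_pos hn]
  rw [im_mul_eA] at h2
  nlinarith

/-- From the `arg` description to the `im` description. -/
lemma im_of_arg {n : ℕ} (hn : 1 ≤ n) {z : ℂ} (h1 : 0 < z.arg) (h2 : z.arg < alphaN n) :
    0 < z.im ∧ (z * eA (-(alphaN n))).im < 0 := by
  have hz : z ≠ 0 := by
    intro hz; rw [hz] at h1; simp [Complex.arg_zero] at h1
  have habs : 0 < ‖z‖ := norm_pos_iff.mpr hz
  constructor
  · have hsin : 0 < Real.sin z.arg := by
      apply Real.sin_pos_of_pos_of_lt_pi h1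
      calc z.arg < alphaN n := h2
        _ ≤ Real.pi / 2 := alpha_le hn
        _ < Real.pi := by linarith [Real.pi_pos]
    have := Complex.sin_arg z
    rw [this] at hsin
    calc (0:ℝ) = ‖z‖ * 0 := by ring
      _ < ‖z‖ * (z.im / ‖z‖) := by
          apply mul_lt_mul_of_pos_left hsin habs
      _ = z.im := by field_simp
  · rw [im_mul_eA]
    have hsin : Real.sin (z.arg + -(alphaN n)) < 0 := by
      apply Real.sin_neg_of_neg_of_neg_pi_lt (by linarith)
      have := alpha_le hn
      linarith [Real.pi_pos]
    nlinarith

lemma omega_iff {n : ℕ} (hn : 1 ≤ n) (z : ℂ) :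
    z ∈ OmegaN n ↔ ‖z‖ < 1 ∧ 0 < z.im ∧ (z * eA (-(alphaN n))).im < 0 ∧
      Real.tan (alphaN n / 2) < ‖z - cA n‖ := by
  constructor
  · rintro ⟨ha, h1, h2, h3⟩
    obtain ⟨i1, i2⟩ := im_of_arg hn h1 h2
    exact ⟨ha, i1, i2, h3⟩
  · rintro ⟨ha, h1, h2, h3⟩
    obtain ⟨a1, a2⟩ := arg_of_im hn h1 h2
    exact ⟨ha, a1, a2, h3⟩

lemma omega_open {n : ℕ} (hn : 1 ≤ n) : IsOpen (OmegaN n) := by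
  have : OmegaN n = {z : ℂ | ‖z‖ < 1} ∩ ({z | 0 < z.im} ∩
      ({z | (z * eA (-(alphaN n))).im < 0} ∩
       {z | Real.tan (alphaN n / 2) < ‖z - cA n‖})) := by
    ext z; rw [omega_iff hn z]; simp [and_assoc]
  rw [this]
  apply IsOpen.inter
  · exact isOpen_lt continuous_norm continuous_const
  apply IsOpen.inter
  · exact isOpen_lt continuous_const Complex.continuous_im
  apply IsOpen.inter
  · exact isOpen_lt (Complex.continuous_im.comp (continuous_mul_right _)) continuous_const
  · exact isOpen_lt continuous_const (continuous_norm.comp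
      (continuous_id.sub continuous_const))

lemma gamma_im_pos {n : ℕ} {ζ : ℂ} (hζ : ζ ∈ gammaN n) : 0 < ζ.im := by
  obtain ⟨h1, h2⟩ := hζ
  set w := ζ - cA n with hw
  have him : ζ.im = Real.tan (alphaN n / 2) + w.im := by
    have hz : ζ = cA n + w := by rw [hw]; ring
    rw [hz, Complex.add_im, cA_im]
  have habs : |w.im| ≤ ‖w‖ := Complex.abs_im_le_norm w
  rw [h2] at habs
  have h0 : 0 ≤ ζ.im := by
    rw [him]
    have := abs_le.mp habs
    linarith [this.1]
  rcases lt_or_eq_of_le h0 with h | h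
  · exact h
  have hwim : w.im = -Real.tan (alphaN n / 2) := by rw [him] at h; linarith
  have hre : w.re = 0 := by
    have hsq : w.re ^ 2 + w.im ^ 2 = Real.tan (alphaN n / 2) ^ 2 := by
      have := Complex.sq_norm w
      rw [h2] at this
      rw [this, Complex.normSq_apply]; ring
    have : w.re ^ 2 = 0 := by rw [hwim] at hsq; nlinarith
    nlinarith [sq_nonneg w.re]
  have hζ1 : ζ = 1 := by
    apply Complex.ext
    · have hz : ζ = cA n + w := by rw [hw]; ring
      rw [hz, Complex.add_re, cA_re, hre, Complex.one_re]
      ring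
    · rw [← h, Complex.one_im]
  rw [hζ1] at h1
  simp at h1

lemma gamma_refl {n : ℕ} (hn : 1 ≤ n) {ζ : ℂ} (hζ : ζ ∈ gammaN n) :
    eA (alphaN n) * (starRingEnd ℂ) ζ ∈ gammaN n := by
  obtain ⟨h1, h2⟩ := hζ
  constructor
  · rw [norm_mul, abs_eA, one_mul, Complex.norm_conj]; exact h1
  · calc ‖eA (alphaN n) * (starRingEnd ℂ) ζ - cA n‖
        = ‖eA (alphaN n) * (starRingEnd ℂ) ζ - eA (alphaN n) * (starRingEnd ℂ) (cA n)‖ := by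
          rw [conj_cA hn]
      _ = ‖eA (alphaN n)‖ * ‖(starRingEnd ℂ) (ζ - cA n)‖ := by
          rw [← norm_mul]; congr 1; rw [map_sub]; ring
      _ = ‖ζ - cA n‖ := by rw [abs_eA, one_mul, Complex.norm_conj]
      _ = _ := h2

lemma gamma_im2 {n : ℕ} (hn : 1 ≤ n) {ζ : ℂ} (hζ : ζ ∈ gammaN n) :
    (ζ * eA (-(alphaN n))).im < 0 := by
  have h1 := gamma_im_pos (gamma_refl hn hζ)
  have : eA (alphaN n) * (starRingEnd ℂ) ζ = (starRingEnd ℂ) (ζ * eA (-(alphaN n))) := by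
    rw [map_mul, conj_eA]; ring_nf
  rw [this, Complex.conj_im] at h1
  linarith

-- ===== Part 4: closure decomposition and sector =====

lemma abs_eq_sqrt (z : ℂ) : ‖z‖ = Real.sqrt (z.re^2 + z.im^2) := by
  rw [Complex.norm_def, Complex.normSq_apply]; ring_nf

lemma closure_omega_ineq {n : ℕ} (hn : 1 ≤ n) {z : ℂ} (hz : z ∈ closure (OmegaN n)) :
    0 ≤ z.im ∧ (z * eA (-(alphaN n))).im ≤ 0 ∧
      Real.tan (alphaN n / 2) ≤ ‖z - cA n‖ := by
  have hsub : OmegaN n ⊆ {w : ℂ | 0 ≤ w.im} ∩ ({w | (w * eA (-(alphaN n))).im ≤ 0} ∩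
      {w | Real.tan (alphaN n / 2) ≤ ‖w - cA n‖}) := by
    intro w hw
    rw [omega_iff hn] at hw
    exact ⟨le_of_lt hw.2.1, le_of_lt hw.2.2.1, le_of_lt hw.2.2.2⟩
  have hcl : IsClosed ({w : ℂ | 0 ≤ w.im} ∩ ({w | (w * eA (-(alphaN n))).im ≤ 0} ∩
      {w | Real.tan (alphaN n / 2) ≤ ‖w - cA n‖})) := by
    apply IsClosed.inter
    · exact isClosed_le continuous_const Complex.continuous_im
    apply IsClosed.inter
    · exact isClosed_le (Complex.continuous_im.comp (continuous_mul_right _)) continuous_const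
    · exact isClosed_le continuous_const (continuous_norm.comp
        (continuous_id.sub continuous_const))
  have := closure_minimal hsub hcl hz
  exact ⟨this.1, this.2.1, this.2.2⟩

lemma closure_omega_cases {n : ℕ} (hn : 1 ≤ n) {z : ℂ}
    (hz : z ∈ closure (OmegaN n)) (h1 : ‖z‖ < 1) :
    z ∈ OmegaN n ∨ (∃ x : ℝ, 0 < x ∧ x < 1 ∧ z = (x:ℂ)) ∨
    (∃ x : ℝ, 0 < x ∧ x < 1 ∧ z = (x:ℂ) * eA (alphaN n)) ∨
    z ∈ gammaN n ∨ z = 0 := by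
  obtain ⟨hi1, hi2, hi3⟩ := closure_omega_ineq hn hz
  rcases eq_or_lt_of_le hi3 with hg | hg
  · exact Or.inr (Or.inr (Or.inr (Or.inl ⟨h1, hg.symm⟩)))
  rcases eq_or_lt_of_le hi1 with h2 | h2
  · -- z is real
    have hzre : z = ((z.re : ℝ) : ℂ) := by
      apply Complex.ext
      · simp
      · simp [← h2]
    have him : (z * eA (-(alphaN n))).im = z.re * Real.sin (-(alphaN n)) := by
      conv_lhs => rw [hzre]
      rw [Complex.mul_im]
      simp [eA_im]
    have hre0 : 0 ≤ z.re := by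
      rw [him, Real.sin_neg] at hi2
      nlinarith [sin_alpha_pos hn]
    rcases eq_or_lt_of_le hre0 with h3 | h3
    · right; right; right; right
      rw [hzre, ← h3]; simp
    · right; left
      refine ⟨z.re, h3, ?_, hzre⟩
      calc z.re ≤ |z.re| := le_abs_self _
        _ ≤ ‖z‖ := Complex.abs_re_le_norm z
        _ < 1 := h1
  rcases eq_or_lt_of_le hi2 with h3 | h3
  · -- z on the ray of angle α
    set ξ := z * eA (-(alphaN n)) with hξ
    have hξre : ξ = ((ξ.re : ℝ) : ℂ) := by
      apply Complex.ext
      · simp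
      · simp [← h3]
    have hzeq : z = ((ξ.re : ℝ) : ℂ) * eA (alphaN n) := by
      have : z = ξ * eA (alphaN n) := by
        rw [hξ, mul_assoc, eA_mul]
        simp [eA_zero]
      rw [this, ← hξre]
    have himz : z.im = ξ.re * Real.sin (alphaN n) := by
      rw [hzeq, Complex.mul_im]
      simp [eA_im]
    have hr0 : 0 < ξ.re := by
      rw [himz] at h2
      nlinarith [sin_alpha_pos hn]
    right; right; left
    refine ⟨ξ.re, hr0, ?_, hzeq⟩
    have : ‖z‖ = |ξ.re| := by
      rw [hzeq, norm_mul, abs_eA, Complex.norm_real, Real.norm_eq_abs, mul_one]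
    rw [this] at h1
    calc ξ.re ≤ |ξ.re| := le_abs_self _
      _ < 1 := h1
  · left
    rw [omega_iff hn]
    exact ⟨h1, h2, h3, hg⟩

def secS (n : ℕ) (δ : ℝ) : Set ℂ :=
  {z | 0 < z.im ∧ (z * eA (-(alphaN n))).im < 0 ∧ ‖z‖ < δ}

lemma secS_convex (n : ℕ) (δ : ℝ) : Convex ℝ (secS n δ) := by
  have h1 : Convex ℝ {z : ℂ | 0 < z.im} := by
    have : IsLinearMap ℝ (fun z : ℂ => z.im) :=
      ⟨fun a b => Complex.add_im a b, fun c a => by simp⟩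
    exact convex_halfSpace_gt this 0
  have h2 : Convex ℝ {z : ℂ | (z * eA (-(alphaN n))).im < 0} := by
    have : IsLinearMap ℝ (fun z : ℂ => (z * eA (-(alphaN n))).im) := by
      constructor
      · intro a b; rw [add_mul, Complex.add_im]
      · intro c a
        rw [Complex.real_smul, Complex.mul_im]
        simp [Complex.ofReal_mul]
        ring
    exact convex_halfSpace_lt this 0
  have h3 : Convex ℝ {z : ℂ | ‖z‖ < δ} := by
    have : {z : ℂ | ‖z‖ < δ} = Metric.ball 0 δ := by
      ext z; simp [Metric.mem_ball, Complex.dist_eq]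
    rw [this]
    exact convex_ball 0 δ
  exact fun x hx y hy a b ha hb hab =>
    ⟨h1 hx.1 hy.1 ha hb hab, h2 hx.2.1 hy.2.1 ha hb hab, h3 hx.2.2 hy.2.2 ha hb hab⟩

lemma secS_sub_omega {n : ℕ} (hn : 1 ≤ n) {δ : ℝ} (hδ1 : δ ≤ 1)
    (hδ2 : δ ≤ 1 / Real.cos (alphaN n / 2) - Real.tan (alphaN n / 2)) :
    secS n δ ⊆ OmegaN n := by
  intro z hz
  obtain ⟨hz1, hz2, hz3⟩ := hz
  rw [omega_iff hn]
  refine ⟨lt_of_lt_of_le hz3 hδ1, hz1, hz2, ?_⟩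
  have key : ‖cA n‖ - ‖z‖ ≤ ‖cA n - z‖ := by
    have := norm_sub_norm_le (cA n) z
    simpa using this
  have habs : ‖z - cA n‖ = ‖cA n - z‖ :=
    norm_sub_rev z (cA n)
  rw [habs, abs_cA hn] at *
  linarith

lemma omega_mem_secS {n : ℕ} (hn : 1 ≤ n) {z : ℂ} (hz : z ∈ OmegaN n) {δ : ℝ}
    (habs : ‖z‖ < δ) : z ∈ secS n δ := by
  rw [omega_iff hn] at hz
  exact ⟨hz.2.1, hz.2.2.1, habs⟩

lemma real_mem_closure {n : ℕ} (hn : 1 ≤ n) {x : ℝ} (h0 : 0 < x) (h1 : x < 1) :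
    (x : ℂ) ∈ closure (OmegaN n) := by
  rw [Metric.mem_closure_iff]
  intro ε hε
  have hsin := sin_alpha_pos hn
  have htan := tan_half_pos hn
  set T := Real.tan (alphaN n / 2) with hT
  set t := min (x * Real.sin (alphaN n) / 2)
      (min ((1-x)/2) (min ((1-x)^2/(2*T+1)) (ε/2))) with ht
  have ht0 : 0 < t := by
    apply lt_min (by positivity)
    apply lt_min (by nlinarith)
    apply lt_min
    · apply div_pos (by nlinarith) (by nlinarith)
    · linarith
  have ht1 : t ≤ x * Real.sin (alphaN n) / 2 := min_le_left _ _
  have ht2 : t ≤ (1-x)/2 := le_trans (min_le_right _ _) (min_le_left _ _)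
  have ht3 : t ≤ (1-x)^2/(2*T+1) :=
    le_trans (min_le_right _ _) (le_trans (min_le_right _ _) (min_le_left _ _))
  have ht4 : t ≤ ε/2 :=
    le_trans (min_le_right _ _) (le_trans (min_le_right _ _) (min_le_right _ _))
  set z : ℂ := (x:ℂ) + (t:ℂ) * Complex.I with hzdef
  have hre : z.re = x := by simp [hzdef]
  have him : z.im = t := by simp [hzdef]
  refine ⟨z, ?_, ?_⟩
  · rw [omega_iff hn]
    have hcosle : Real.cos (alphaN n) ≤ 1 := Real.cos_le_one _
    have hcos0 : 0 ≤ Real.cos (alphaN n) := by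
      apply Real.cos_nonneg_of_mem_Icc
      constructor
      · linarith [alpha_pos hn, Real.pi_pos]
      · exact alpha_le hn
    refine ⟨?_, by rw [him]; exact ht0, ?_, ?_⟩
    · -- abs z < 1
      rw [abs_eq_sqrt, hre, him]
      rw [show (1:ℝ) = Real.sqrt 1 by simp]
      apply Real.sqrt_lt_sqrt (by positivity)
      nlinarith
    · -- angular condition
      rw [Complex.mul_im, hre, him, eA_im, eA_re, Real.sin_neg, Real.cos_neg]
      nlinarith
    · -- circle condition
      have hzre : (z - cA n).re = x - 1 := by
        rw [Complex.sub_re, hre, cA_re]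
      have hzim : (z - cA n).im = t - T := by
        rw [Complex.sub_im, him, cA_im, hT]
      rw [abs_eq_sqrt, hzre, hzim]
      rw [show Real.tan (alphaN n / 2) = T from rfl]
      rw [Real.lt_sqrt (le_of_lt htan)]
      have hB : (0:ℝ) < 2*T+1 := by nlinarith
      have h5 : t * (2*T+1) ≤ (1-x)^2 := (le_div_iff₀ hB).mp ht3
      nlinarith
  · rw [Complex.dist_eq, hzdef]
    rw [show (x:ℂ) - ((x:ℂ) + (t:ℂ) * Complex.I) = -((t:ℂ) * Complex.I) by ring]
    rw [norm_neg, norm_mul, Complex.norm_I, Complex.norm_real, Real.norm_eq_abs, mul_one,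
      abs_of_pos ht0]
    linarith

-- ===== Part 5: IVT at the vertex =====

lemma vertex_pos {n : ℕ} {h : ℝ} {u : ℂ → ℝ} (hn : 1 ≤ n)
    (hu : FundamentalPiece n h u) {s : ℝ} (hs : 0 < s)
    (H : ∀ δ > 0, ∃ z ∈ OmegaN n, ‖z‖ < δ ∧ s < u z) :
    ((0:ℂ), s) ∈ closure (graphSet (OmegaN n) u) := by
  rw [Metric.mem_closure_iff]
  intro ε hε
  set δ : ℝ := min 1 (min (1 / Real.cos (alphaN n / 2) - Real.tan (alphaN n / 2)) ε) with hδdef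
  have hδ0 : 0 < δ := lt_min one_pos (lt_min (sec_sub_tan_pos hn) hε)
  have hδ1 : δ ≤ 1 := min_le_left _ _
  have hδ2 : δ ≤ 1 / Real.cos (alphaN n / 2) - Real.tan (alphaN n / 2) :=
    le_trans (min_le_right _ _) (min_le_left _ _)
  have hδε : δ ≤ ε := le_trans (min_le_right _ _) (min_le_right _ _)
  obtain ⟨z, hzΩ, hzabs, hzu⟩ := H δ hδ0
  -- small-value point near δ/2 on the real axis
  have hx0 : (0:ℝ) < δ/2 := by linarith
  have hx1 : δ/2 < 1 := by linarith
  have hxc : ((δ/2 : ℝ) : ℂ) ∈ closure (OmegaN n) := real_mem_closure hn hx0 hx1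
  have hne : (𝓝[OmegaN n] ((δ/2 : ℝ) : ℂ)).NeBot := mem_closure_iff_nhdsWithin_neBot.mp hxc
  have hten := hu.2.1 (δ/2) hx0 hx1
  have hev1 : ∀ᶠ w in 𝓝[OmegaN n] ((δ/2 : ℝ) : ℂ), u w ∈ Set.Ioo (-s) s :=
    hten (Ioo_mem_nhds (by linarith) hs)
  have hev2 : ∀ᶠ w in 𝓝[OmegaN n] ((δ/2 : ℝ) : ℂ), dist w ((δ/2 : ℝ) : ℂ) < δ/2 :=
    Filter.Eventually.filter_mono nhdsWithin_le_nhds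
      (Metric.eventually_nhds_iff.mpr ⟨δ/2, by linarith, fun y hy => hy⟩)
  have hev3 : ∀ᶠ w in 𝓝[OmegaN n] ((δ/2 : ℝ) : ℂ), w ∈ OmegaN n := eventually_mem_nhdsWithin
  obtain ⟨w, hw1, hw2, hw3⟩ := (hev1.and (hev2.and hev3)).exists
  have hwabs : ‖w‖ < δ := by
    calc ‖w‖ = ‖w - ((δ/2:ℝ):ℂ) + ((δ/2:ℝ):ℂ)‖ := by ring_nf
      _ ≤ ‖w - ((δ/2:ℝ):ℂ)‖ + ‖((δ/2:ℝ):ℂ)‖ := norm_add_le _ _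
      _ < δ/2 + δ/2 := by
          apply add_lt_add_of_lt_of_le
          · rw [← Complex.dist_eq]; exact hw2
          · rw [Complex.norm_real, Real.norm_eq_abs, abs_of_pos hx0]
      _ = δ := by ring
  have hzS : z ∈ secS n δ := omega_mem_secS hn hzΩ hzabs
  have hwS : w ∈ secS n δ := omega_mem_secS hn hw3 hwabs
  -- the segment from w to z
  set f : ℝ → ℂ := fun r => w + r • (z - w) with hf
  have hmaps : ∀ r ∈ Set.uIcc (0:ℝ) 1, f r ∈ secS n δ := by
    intro r hr
    rw [Set.uIcc_of_le (by norm_num : (0:ℝ) ≤ 1)] at hr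
    have : f r ∈ segment ℝ w z := by
      rw [segment_eq_image']
      exact ⟨r, hr, rfl⟩
    exact (secS_convex n δ).segment_subset hwS hzS this
  have hfin : ∀ r ∈ Set.uIcc (0:ℝ) 1, f r ∈ OmegaN n :=
    fun r hr => secS_sub_omega hn hδ1 hδ2 (hmaps r hr)
  have hcontf : ContinuousOn (fun r => u (f r)) (Set.uIcc (0:ℝ) 1) := by
    apply ContinuousOn.comp (hu.1.1.continuousOn)
    · exact (continuous_const.add (continuous_id.smul continuous_const)).continuousOn
    · exact hfin
  have hf0 : f 0 = w := by simp [hf]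
  have hf1 : f 1 = z := by simp [hf]
  have hsmem : s ∈ Set.uIcc (u (f 0)) (u (f 1)) := by
    rw [hf0, hf1]
    exact Set.mem_uIcc.mpr (Or.inl ⟨le_of_lt hw1.2, le_of_lt hzu⟩)
  obtain ⟨r, hr, hur⟩ := intermediate_value_uIcc hcontf hsmem
  refine ⟨(f r, u (f r)), ⟨hfin r hr, rfl⟩, ?_⟩
  have habs2 : ‖f r‖ < δ := (hmaps r hr).2.2
  rw [Prod.dist_eq]
  apply max_lt
  · rw [Complex.dist_eq]
    calc ‖0 - f r‖ = ‖f r‖ := by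
          rw [zero_sub, norm_neg]
      _ < δ := habs2
      _ ≤ ε := hδε
  · have hur' : u (f r) = s := hur
    show dist s (u (f r)) < ε
    rw [hur', dist_self]; exact hε

lemma vertex_neg {n : ℕ} {h : ℝ} {u : ℂ → ℝ} (hn : 1 ≤ n)
    (hu : FundamentalPiece n h u) {s : ℝ} (hs : s < 0)
    (H : ∀ δ > 0, ∃ z ∈ OmegaN n, ‖z‖ < δ ∧ u z < s) :
    ((0:ℂ), s) ∈ closure (graphSet (OmegaN n) u) := by
  rw [Metric.mem_closure_iff]
  intro ε hε
  set δ : ℝ := min 1 (min (1 / Real.cos (alphaN n / 2) - Real.tan (alphaN n / 2)) ε) with hδdef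
  have hδ0 : 0 < δ := lt_min one_pos (lt_min (sec_sub_tan_pos hn) hε)
  have hδ1 : δ ≤ 1 := min_le_left _ _
  have hδ2 : δ ≤ 1 / Real.cos (alphaN n / 2) - Real.tan (alphaN n / 2) :=
    le_trans (min_le_right _ _) (min_le_left _ _)
  have hδε : δ ≤ ε := le_trans (min_le_right _ _) (min_le_right _ _)
  obtain ⟨z, hzΩ, hzabs, hzu⟩ := H δ hδ0
  have hx0 : (0:ℝ) < δ/2 := by linarith
  have hx1 : δ/2 < 1 := by linarith
  have hxc : ((δ/2 : ℝ) : ℂ) ∈ closure (OmegaN n) := real_mem_closure hn hx0 hx1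
  have hne : (𝓝[OmegaN n] ((δ/2 : ℝ) : ℂ)).NeBot := mem_closure_iff_nhdsWithin_neBot.mp hxc
  have hten := hu.2.1 (δ/2) hx0 hx1
  have hev1 : ∀ᶠ w in 𝓝[OmegaN n] ((δ/2 : ℝ) : ℂ), u w ∈ Set.Ioo s (-s) :=
    hten (Ioo_mem_nhds hs (by linarith))
  have hev2 : ∀ᶠ w in 𝓝[OmegaN n] ((δ/2 : ℝ) : ℂ), dist w ((δ/2 : ℝ) : ℂ) < δ/2 :=
    Filter.Eventually.filter_mono nhdsWithin_le_nhds
      (Metric.eventually_nhds_iff.mpr ⟨δ/2, by linarith, fun y hy => hy⟩)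
  have hev3 : ∀ᶠ w in 𝓝[OmegaN n] ((δ/2 : ℝ) : ℂ), w ∈ OmegaN n := eventually_mem_nhdsWithin
  obtain ⟨w, hw1, hw2, hw3⟩ := (hev1.and (hev2.and hev3)).exists
  have hwabs : ‖w‖ < δ := by
    calc ‖w‖ = ‖w - ((δ/2:ℝ):ℂ) + ((δ/2:ℝ):ℂ)‖ := by ring_nf
      _ ≤ ‖w - ((δ/2:ℝ):ℂ)‖ + ‖((δ/2:ℝ):ℂ)‖ := norm_add_le _ _
      _ < δ/2 + δ/2 := by
          apply add_lt_add_of_lt_of_le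
          · rw [← Complex.dist_eq]; exact hw2
          · rw [Complex.norm_real, Real.norm_eq_abs, abs_of_pos hx0]
      _ = δ := by ring
  have hzS : z ∈ secS n δ := omega_mem_secS hn hzΩ hzabs
  have hwS : w ∈ secS n δ := omega_mem_secS hn hw3 hwabs
  set f : ℝ → ℂ := fun r => w + r • (z - w) with hf
  have hmaps : ∀ r ∈ Set.uIcc (0:ℝ) 1, f r ∈ secS n δ := by
    intro r hr
    rw [Set.uIcc_of_le (by norm_num : (0:ℝ) ≤ 1)] at hr
    have : f r ∈ segment ℝ w z := by
      rw [segment_eq_image']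
      exact ⟨r, hr, rfl⟩
    exact (secS_convex n δ).segment_subset hwS hzS this
  have hfin : ∀ r ∈ Set.uIcc (0:ℝ) 1, f r ∈ OmegaN n :=
    fun r hr => secS_sub_omega hn hδ1 hδ2 (hmaps r hr)
  have hcontf : ContinuousOn (fun r => u (f r)) (Set.uIcc (0:ℝ) 1) := by
    apply ContinuousOn.comp (hu.1.1.continuousOn)
    · exact (continuous_const.add (continuous_id.smul continuous_const)).continuousOn
    · exact hfin
  have hf0 : f 0 = w := by simp [hf]
  have hf1 : f 1 = z := by simp [hf]
  have hsmem : s ∈ Set.uIcc (u (f 0)) (u (f 1)) := by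
    rw [hf0, hf1]
    exact Set.mem_uIcc.mpr (Or.inr ⟨le_of_lt hzu, le_of_lt hw1.1⟩)
  obtain ⟨r, hr, hur⟩ := intermediate_value_uIcc hcontf hsmem
  refine ⟨(f r, u (f r)), ⟨hfin r hr, rfl⟩, ?_⟩
  have habs2 : ‖f r‖ < δ := (hmaps r hr).2.2
  rw [Prod.dist_eq]
  apply max_lt
  · rw [Complex.dist_eq]
    calc ‖0 - f r‖ = ‖f r‖ := by
          rw [zero_sub, norm_neg]
      _ < δ := habs2
      _ ≤ ε := hδε
  · have hur' : u (f r) = s := hur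
    show dist s (u (f r)) < ε
    rw [hur', dist_self]; exact hε

-- ===== Part 6: the plane over γ is in the closure of Σ =====

lemma plane_sub_closure {n : ℕ} {h : ℝ} {u : ℂ → ℝ} (hn : 1 ≤ n) (hh : 0 < h)
    (hu : FundamentalPiece n h u) :
    planeN n ⊆ closure (SigmaSet n h u) := by
  rintro ⟨ζ, t⟩ hp
  have hp' : ζ ∈ gammaN n := hp
  have hζ1 : ‖ζ‖ < 1 := hp'.1
  have hζ2 : ‖ζ - cA n‖ = Real.tan (alphaN n / 2) := hp'.2
  have him1 : 0 < ζ.im := gamma_im_pos hp'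
  have him2 := gamma_im2 hn hp'
  have htanp := tan_half_pos hn
  set T := Real.tan (alphaN n / 2) with hTdef
  rw [Metric.mem_closure_iff]
  intro ε hε
  set U : Set ℂ := {z | ‖z‖ < 1 ∧ 0 < z.im ∧ (z * eA (-(alphaN n))).im < 0} with hU
  have hUopen : IsOpen U := by
    apply IsOpen.inter (isOpen_lt continuous_norm continuous_const)
    apply IsOpen.inter (isOpen_lt continuous_const Complex.continuous_im)
    exact isOpen_lt (Complex.continuous_im.comp (continuous_mul_right _)) continuous_const
  have hζU : ζ ∈ U := ⟨hζ1, him1, him2⟩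
  set F : ℝ → ℂ := fun σ => cA n + ((1+σ) : ℝ) • (ζ - cA n) with hF
  have hFcont : Continuous F :=
    continuous_const.add ((continuous_const.add continuous_id).smul continuous_const)
  have hF0 : F 0 = ζ := by
    show cA n + ((1+(0:ℝ)) : ℝ) • (ζ - cA n) = ζ
    norm_num
  have hFnh : F ⁻¹' U ∈ 𝓝 (0:ℝ) :=
    (hFcont.continuousAt).preimage_mem_nhds (hUopen.mem_nhds (by rw [hF0]; exact hζU))
  obtain ⟨r0, hr0pos, hr0⟩ := Metric.mem_nhds_iff.mp hFnh
  set s₁ := r0/2 with hs₁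
  have hs₁pos : 0 < s₁ := by positivity
  have hFU : ∀ σ : ℝ, |σ| ≤ s₁ → F σ ∈ U := by
    intro σ hσ
    apply hr0
    rw [Metric.mem_ball, Real.dist_eq, sub_zero]
    calc |σ| ≤ s₁ := hσ
      _ < r0 := by rw [hs₁]; linarith
  have hFdist : ∀ σ : ℝ, ‖F σ - cA n‖ = |1+σ| * T := by
    intro σ
    have : F σ - cA n = ((1+σ : ℝ) : ℂ) * (ζ - cA n) := by
      rw [hF]; simp [Complex.real_smul]
    rw [this, norm_mul, Complex.norm_real, Real.norm_eq_abs, hζ2]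
  have hmem : ∀ σ : ℝ, 0 < σ → σ ≤ s₁ → F σ ∈ OmegaN n := by
    intro σ h0 h1
    have hUσ := hFU σ (by rw [abs_of_pos h0]; exact h1)
    rw [omega_iff hn]
    refine ⟨hUσ.1, hUσ.2.1, hUσ.2.2, ?_⟩
    rw [hFdist σ, abs_of_pos (by linarith)]
    nlinarith
  have hFten : Tendsto F (𝓝[>] (0:ℝ)) (𝓝[OmegaN n] ζ) := by
    rw [tendsto_nhdsWithin_iff]
    constructor
    · have := hFcont.continuousAt (x := (0:ℝ))
      rw [ContinuousAt, hF0] at this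
      exact this.mono_left nhdsWithin_le_nhds
    · filter_upwards [Ioc_mem_nhdsGT_of_mem (Set.mem_Ico.mpr ⟨le_refl (0:ℝ), hs₁pos⟩)]
        with σ hσ
      exact hmem σ hσ.1 hσ.2
  have hblow : Tendsto (fun σ => u (F σ)) (𝓝[>] (0:ℝ)) atTop :=
    (hu.2.2.2 ζ hp').comp hFten
  set a := min s₁ (ε/(2*(T+1))) with ha
  have ha0 : 0 < a := lt_min hs₁pos (by positivity)
  have has₁ : a ≤ s₁ := min_le_left _ _
  have haε : a ≤ ε/(2*(T+1)) := min_le_right _ _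
  set c := u (F a) with hc
  set k := Int.ceil ((c - t) / (2*h*n)) with hk
  have hn0 : (0:ℝ) < (n:ℝ) := by exact_mod_cast hn
  have h2hn : (0:ℝ) < 2*h*n := by positivity
  have hck : c ≤ t + 2*h*n*(k:ℝ) := by
    have := Int.le_ceil ((c - t) / (2*h*n))
    rw [div_le_iff₀ h2hn] at this
    linarith [this]
  set Tv := t + 2*h*(n:ℝ)*(k:ℝ) with hTv
  have hev := (hblow.eventually_gt_atTop Tv).and
    (eventually_mem_nhdsWithin (s := Set.Ioi (0:ℝ)))
  obtain ⟨b, hb1, hb2⟩ := (hev.and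
    (Filter.eventually_of_mem (Ioo_mem_nhdsGT_of_mem (Set.mem_Ico.mpr ⟨le_refl (0:ℝ), ha0⟩))
      (fun y hy => hy))).exists
  obtain ⟨hb1, _⟩ := hb1
  have hb0 : 0 < b := hb2.1
  have hba : b < a := hb2.2
  have hsub : Set.uIcc b a ⊆ {σ : ℝ | 0 < σ ∧ σ ≤ s₁} := by
    intro σ hσ
    rw [Set.uIcc_of_le (le_of_lt hba)] at hσ
    exact ⟨lt_of_lt_of_le hb0 hσ.1, le_trans hσ.2 has₁⟩
  have hcont : ContinuousOn (fun σ => u (F σ)) (Set.uIcc b a) := by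
    apply ContinuousOn.comp (hu.1.1.continuousOn) (hFcont.continuousOn)
    intro σ hσ
    exact hmem σ (hsub hσ).1 (hsub hσ).2
  have hTmem : Tv ∈ Set.uIcc (u (F b)) (u (F a)) :=
    Set.mem_uIcc.mpr (Or.inr ⟨hck, le_of_lt hb1⟩)
  obtain ⟨σv, hσv, hval⟩ := intermediate_value_uIcc hcont hTmem
  have hval' : u (F σv) = Tv := hval
  set v := F σv with hv
  have hvΩ : v ∈ OmegaN n := hmem σv (hsub hσv).1 (hsub hσv).2
  have hvabs : ‖v‖ < 1 := hvΩ.1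
  -- the group element: vertical translation by -2hnk
  set g := trP (2*h*(n:ℝ)*((-k : ℤ) : ℝ)) with hg
  have hgmem : g ∈ Ggrp (alphaN n) h := trP_mem hn h (-k)
  refine ⟨g (v, u v), ?_, ?_⟩
  · rw [SigmaSet]
    apply Set.mem_biUnion hgmem
    refine ⟨(v, u v), ⟨subset_closure ⟨hvΩ, rfl⟩, ?_⟩, rfl⟩
    exact hvabs
  · have hgq : g (v, u v) = (v, t) := by
      rw [hg]
      show ((v, u v).1, (v, u v).2 + 2*h*(n:ℝ)*((-k : ℤ) : ℝ)) = (v, t)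
      have h2 : (v, u v).2 + 2*h*(n:ℝ)*((-k : ℤ) : ℝ) = t := by
        show u v + 2*h*(n:ℝ)*((-k : ℤ) : ℝ) = t
        rw [show u v = Tv from hval', hTv]
        push_cast
        ring
      rw [h2]
    rw [hgq, Prod.dist_eq]
    apply max_lt
    · rw [Complex.dist_eq]
      have : ζ - v = -(σv • (ζ - cA n)) := by
        rw [hv, hF]
        show ζ - (cA n + ((1+σv) : ℝ) • (ζ - cA n)) = -(σv • (ζ - cA n))
        rw [Complex.real_smul, Complex.real_smul]
        push_cast
        ring
      rw [this, norm_neg, Complex.real_smul, norm_mul, Complex.norm_real, Real.norm_eq_abs, hζ2]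
      have hσva : σv ≤ a := by
        rw [Set.uIcc_of_le (le_of_lt hba)] at hσv
        exact hσv.2
      have hσv0 : 0 < σv := (hsub hσv).1
      rw [abs_of_pos hσv0]
      calc σv * T ≤ a * T := by nlinarith
        _ ≤ (ε/(2*(T+1))) * T := by nlinarith
        _ < ε := by
            rw [div_mul_eq_mul_div, div_lt_iff₀ (by positivity)]
            nlinarith
    · rw [dist_self]; exact hε

-- ===== Part 7: the hard inclusion =====

lemma int_const_of_tendsto {h : ℝ} (hh : 0 < h) {m : ℕ → ℤ} {L : ℝ}
    (hm : Tendsto (fun j => 2*h*((m j : ℤ) : ℝ)) atTop (𝓝 L)) :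
    ∃ M : ℤ, (∀ᶠ j in atTop, m j = M) ∧ L = 2*h*(M:ℝ) := by
  have hev : ∀ᶠ j in atTop, dist (2*h*((m j : ℤ):ℝ)) L < h := by
    filter_upwards [hm (Metric.ball_mem_nhds L hh)] with j hj
    exact Metric.mem_ball.mp hj
  obtain ⟨N, hN⟩ := Filter.eventually_atTop.mp hev
  have key : ∀ j ≥ N, m j = m N := by
    intro j hj
    have h1 := hN j hj
    have h2 := hN N (le_refl N)
    rw [Real.dist_eq] at h1 h2
    have h3 : |((m j - m N : ℤ) : ℝ)| < 1 := by
      have : |2*h*((m j : ℤ):ℝ) - 2*h*((m N : ℤ):ℝ)| < 2*h := by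
        calc |2*h*((m j : ℤ):ℝ) - 2*h*((m N : ℤ):ℝ)|
            ≤ |2*h*((m j : ℤ):ℝ) - L| + |2*h*((m N : ℤ):ℝ) - L| := by
              rw [show 2*h*((m j : ℤ):ℝ) - 2*h*((m N : ℤ):ℝ)
                = (2*h*((m j : ℤ):ℝ) - L) - (2*h*((m N : ℤ):ℝ) - L) by ring]
              exact abs_sub _ _
          _ < 2*h := by linarith
      have heq : 2*h*((m j : ℤ):ℝ) - 2*h*((m N : ℤ):ℝ) = 2*h*((m j - m N : ℤ):ℝ) := by
        push_cast; ring
      rw [heq, abs_mul, abs_of_pos (by linarith : (0:ℝ) < 2*h)] at this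
      nlinarith [abs_nonneg (((m j - m N : ℤ):ℝ))]
    have h4 : |m j - m N| < 1 := by
      rw [← Int.cast_abs] at h3
      exact_mod_cast h3
    have h5 : m j - m N = 0 := Int.abs_lt_one_iff.mp h4
    omega
  refine ⟨m N, Filter.eventually_atTop.mpr ⟨N, key⟩, ?_⟩
  have hconst : Tendsto (fun _ : ℕ => 2*h*((m N : ℤ):ℝ)) atTop (𝓝 L) := by
    apply hm.congr'
    filter_upwards [Filter.eventually_atTop.mpr ⟨N, key⟩] with j hj
    rw [hj]
  exact (tendsto_nhds_unique tendsto_const_nhds hconst).symm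

def Bset (n : ℕ) (h : ℝ) (u : ℂ → ℝ) (w : ℂ) (σ e : Bool) : Set (ℂ × ℝ) :=
  {q | ∃ m : ℤ, ∃ z : ℂ, z ∈ OmegaN n ∧
    (∃ g, g ∈ Ggrp (alphaN n) h ∧ ⇑g = fmap h w σ e m) ∧ q = fmap h w σ e m (z, u z)}

lemma closure_Bset_sub {n : ℕ} {h : ℝ} {u : ℂ → ℝ} (hn : 1 ≤ n) (hh : 0 < h)
    (hu : FundamentalPiece n h u) {w : ℂ} {σ e : Bool} (hw : w ^ (2*n) = 1) {p : ℂ × ℝ}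
    (hp : p ∈ closure (Bset n h u w σ e)) (hpDR : p ∈ DR) :
    p ∈ SigmaSet n h u ∪ ⋃ g ∈ Ggrp (alphaN n) h, ⇑g '' planeN n := by
  have hwabs : ‖w‖ = 1 := abs_one_of_pow (by omega) hw
  have hw0 : w ≠ 0 := by
    intro h0; rw [h0] at hwabs; simp at hwabs
  obtain ⟨q, hqmem, hqten⟩ := mem_closure_iff_seq_limit.mp hp
  choose m z hzΩ hgex hqeq using hqmem
  have hq1 : ∀ j, (q j).1 = w * cc σ (z j) := fun j => by rw [hqeq j]; rfl
  have hq2 : ∀ j, (q j).2 = sg e * u (z j) + 2*h*((m j : ℤ):ℝ) := fun j => by rw [hqeq j]; rfl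
  set ψm : ℂ → ℂ := fun y => cc σ (w⁻¹ * y) with hψm
  have hψcont : Continuous ψm := (cc_cont σ).comp (continuous_const.mul continuous_id)
  have hzj : ∀ j, z j = ψm ((q j).1) := by
    intro j
    rw [hq1 j, hψm]
    simp only
    rw [inv_mul_cancel_left₀ hw0, cc_cc]
  set zL := ψm p.1 with hzL
  have hq1ten : Tendsto (fun j => (q j).1) atTop (𝓝 p.1) := (continuous_fst.tendsto p).comp hqten
  have hq2ten : Tendsto (fun j => (q j).2) atTop (𝓝 p.2) := (continuous_snd.tendsto p).comp hqten
  have hzten : Tendsto z atTop (𝓝 zL) :=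
    ((hψcont.tendsto p.1).comp hq1ten).congr (fun j => (hzj j).symm)
  have habszL : ‖zL‖ = ‖p.1‖ := by
    rw [hzL, hψm]
    simp only
    rw [abs_cc, norm_mul, norm_inv, hwabs]
    simp
  have hzLlt : ‖zL‖ < 1 := by rw [habszL]; exact hpDR
  have hp1 : p.1 = w * cc σ zL := by
    rw [hzL, hψm]
    simp only
    rw [cc_cc, mul_inv_cancel_left₀ hw0]
  have hzLcl : zL ∈ closure (OmegaN n) :=
    mem_closure_of_tendsto hzten (Filter.Eventually.of_forall hzΩ)
  by_cases hbdd : ∃ C : ℝ, ∃ᶠ j in atTop, |u (z j)| ≤ C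
  · -- bounded case: p ∈ Σ
    left
    obtain ⟨C, hC⟩ := hbdd
    obtain ⟨φ, hφ, hφC⟩ := extraction_of_frequently_atTop hC
    obtain ⟨s, _, ψ2, hψ2, hsconv⟩ := tendsto_subseq_of_bounded (Metric.isBounded_Icc (-C) C)
      (x := fun j => u (z (φ j))) (fun j => Set.mem_Icc.mpr (abs_le.mp (hφC j)))
    set ρ := φ ∘ ψ2 with hρ
    have hρten : Tendsto ρ atTop atTop := (hφ.comp hψ2).tendsto_atTop
    have huρ : Tendsto (fun j => u (z (ρ j))) atTop (𝓝 s) := hsconv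
    have hmten : Tendsto (fun j => 2*h*((m (ρ j) : ℤ):ℝ)) atTop (𝓝 (p.2 - sg e * s)) := by
      have h1 : Tendsto (fun j => (q (ρ j)).2 - sg e * u (z (ρ j))) atTop
          (𝓝 (p.2 - sg e * s)) := (hq2ten.comp hρten).sub (tendsto_const_nhds.mul huρ)
      apply h1.congr
      intro j
      rw [hq2 (ρ j)]
      ring
    obtain ⟨M, hMev, hML⟩ := int_const_of_tendsto hh hmten
    have hgr : Tendsto (fun j => (z (ρ j), u (z (ρ j)))) atTop (𝓝 (zL, s)) :=
      (hzten.comp hρten).prodMk_nhds huρ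
    have hgrcl : (zL, s) ∈ closure (graphSet (OmegaN n) u) :=
      mem_closure_of_tendsto hgr (Filter.Eventually.of_forall (fun j => ⟨hzΩ _, rfl⟩))
    obtain ⟨j1, hj1⟩ := hMev.exists
    obtain ⟨g, hgG, hgco⟩ := hgex (ρ j1)
    rw [SigmaSet]
    apply Set.mem_biUnion hgG
    refine ⟨(zL, s), ⟨hgrcl, hzLlt⟩, ?_⟩
    rw [hgco, hj1]
    show fmap h w σ e M (zL, s) = p
    have hp2 : p.2 = sg e * s + 2*h*(M:ℝ) := by linarith [hML]
    show (w * cc σ zL, sg e * s + 2*h*(M:ℝ)) = p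
    rw [← hp1, ← hp2]
  · -- unbounded case
    push_neg at hbdd
    have hUB : ∀ C : ℝ, ∀ᶠ j in atTop, C < |u (z j)| := by
      intro C
      exact hbdd C
    have hcontra : ∀ L : ℝ, Tendsto (fun j => u (z j)) atTop (𝓝 L) → False := by
      intro L hL
      have h1 := hUB (|L| + 1)
      have h2 : ∀ᶠ j in atTop, |u (z j) - L| < 1 := by
        filter_upwards [hL (Metric.ball_mem_nhds L one_pos)] with j hj
        rw [Set.mem_preimage, Metric.mem_ball, Real.dist_eq] at hj
        exact hj
      obtain ⟨j, hj1, hj2⟩ := (h1.and h2).exists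
      have h3 : |u (z j)| - |L| ≤ |u (z j) - L| := abs_sub_abs_le_abs_sub _ _
      linarith
    rcases closure_omega_cases hn hzLcl hzLlt with hcase | hcase | hcase | hcase | hcase
    · -- interior: contradiction
      exfalso
      have hcont : ContinuousAt u zL :=
        hu.1.1.continuousOn.continuousAt ((omega_open hn).mem_nhds hcase)
      exact hcontra (u zL) (hcont.tendsto.comp hzten)
    · -- lower segment: contradiction
      exfalso
      obtain ⟨x, hx0, hx1, hzeq⟩ := hcase
      have hztenW : Tendsto z atTop (𝓝[OmegaN n] ((x:ℝ):ℂ)) := by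
        rw [tendsto_nhdsWithin_iff]
        exact ⟨hzeq ▸ hzten, Filter.Eventually.of_forall hzΩ⟩
      exact hcontra 0 ((hu.2.1 x hx0 hx1).comp hztenW)
    · -- upper segment: contradiction
      exfalso
      obtain ⟨x, hx0, hx1, hzeq⟩ := hcase
      have hztenW : Tendsto z atTop (𝓝[OmegaN n] ((x:ℂ) * eA (alphaN n))) := by
        rw [tendsto_nhdsWithin_iff]
        exact ⟨hzeq ▸ hzten, Filter.Eventually.of_forall hzΩ⟩
      exact hcontra h ((hu.2.2.1 x hx0 hx1).comp hztenW)
    · -- on γ: p is on a plane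
      right
      obtain ⟨g, hgG, hgco⟩ := hgex 0
      apply Set.mem_biUnion hgG
      refine ⟨(zL, sg e * (p.2 - 2*h*((m 0 : ℤ):ℝ))), hcase, ?_⟩
      rw [hgco]
      show (w * cc σ zL, sg e * (sg e * (p.2 - 2*h*((m 0 : ℤ):ℝ))) + 2*h*((m 0 : ℤ):ℝ)) = p
      have h2 : sg e * (sg e * (p.2 - 2*h*((m 0 : ℤ):ℝ))) + 2*h*((m 0 : ℤ):ℝ) = p.2 := by
        rw [← mul_assoc, sg_mul_sg, one_mul]
        ring
      rw [h2, ← hp1]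
    · -- at the vertex 0
      have hp10 : p.1 = 0 := by
        rw [hp1, hcase]
        cases σ <;> simp [cc]
      have hevq : ∀ᶠ j in atTop, dist (q j) p < 1 := by
        filter_upwards [hqten (Metric.ball_mem_nhds p one_pos)] with j hj
        exact Metric.mem_ball.mp (Set.mem_preimage.mp hj)
      have hqp2 : ∀ j, |p.2 - (q j).2| ≤ dist (q j) p := by
        intro j
        rw [Prod.dist_eq]
        calc |p.2 - (q j).2| = dist ((q j).2) p.2 := by rw [Real.dist_eq, abs_sub_comm]
          _ ≤ max (dist ((q j).1) p.1) (dist ((q j).2) p.2) := le_max_right _ _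
      have hztenz : Tendsto z atTop (𝓝 0) := hcase ▸ hzten
      have hevzδ : ∀ δ : ℝ, 0 < δ → ∀ᶠ j in atTop, ‖z j‖ < δ := by
        intro δ hδ
        filter_upwards [hztenz (Metric.ball_mem_nhds 0 hδ)] with j hj
        rw [Set.mem_preimage, Metric.mem_ball, Complex.dist_eq, sub_zero] at hj
        exact hj
      have hsabs : ∀ y : ℝ, sg e * y ≤ |y| ∧ -|y| ≤ sg e * y := by
        intro y
        cases e <;> simp [sg] <;> [exact ⟨le_abs_self y, neg_abs_le y⟩;
          exact ⟨neg_le_abs y, by linarith [le_abs_self y]⟩]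
      by_cases hpos : ∃ᶠ j in atTop, 0 ≤ u (z j)
      · -- positive blow-up at the vertex
        obtain ⟨J, hJ1, hJ2, hJ3⟩ := (hpos.and_eventually ((hUB 1).and hevq)).exists
        have huJ : 1 < u (z J) := by rwa [_root_.abs_of_nonneg hJ1] at hJ2
        set s := sg e * (p.2 - 2*h*((m J : ℤ):ℝ)) with hs
        have hsrel : s = sg e * (p.2 - (q J).2) + u (z J) := by
          rw [hs, hq2 J]
          linear_combination (u (z J)) * sg_mul_sg e
        have hspos : 0 < s := by
          have h5 := (hsabs (p.2 - (q J).2)).2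
          have h6 : |p.2 - (q J).2| < 1 := lt_of_le_of_lt (hqp2 J) hJ3
          rw [hsrel]
          linarith
        have H : ∀ δ > 0, ∃ z' ∈ OmegaN n, ‖z'‖ < δ ∧ s < u z' := by
          intro δ hδ
          obtain ⟨j, hj1, hj2, hj3⟩ :=
            (hpos.and_eventually ((hUB s).and (hevzδ δ hδ))).exists
          exact ⟨z j, hzΩ j, hj3, by rwa [_root_.abs_of_nonneg hj1] at hj2⟩
        have hgr := vertex_pos hn hu hspos H
        left
        obtain ⟨g, hgG, hgco⟩ := hgex J
        rw [SigmaSet]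
        apply Set.mem_biUnion hgG
        refine ⟨((0:ℂ), s), ⟨hgr, by simp [DR]⟩, ?_⟩
        rw [hgco]
        show (w * cc σ 0, sg e * s + 2*h*((m J : ℤ):ℝ)) = p
        have h1 : w * cc σ 0 = p.1 := by
          rw [hp10]
          cases σ <;> simp [cc]
        have h2 : sg e * s + 2*h*((m J : ℤ):ℝ) = p.2 := by
          rw [hs, ← mul_assoc, sg_mul_sg, one_mul]
          ring
        rw [h1, h2]
      · -- negative blow-up at the vertex
        have hneg : ∀ᶠ j in atTop, u (z j) < 0 := by
          rw [Filter.not_frequently] at hpos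
          filter_upwards [hpos] with j hj
          exact not_le.mp hj
        obtain ⟨J, hJ1, hJ2, hJ3⟩ := ((hneg.and ((hUB 1).and hevq))).exists
        have huJ : u (z J) < -1 := by
          rw [_root_.abs_of_neg hJ1] at hJ2
          linarith
        set s := sg e * (p.2 - 2*h*((m J : ℤ):ℝ)) with hs
        have hsrel : s = sg e * (p.2 - (q J).2) + u (z J) := by
          rw [hs, hq2 J]
          linear_combination (u (z J)) * sg_mul_sg e
        have hsneg : s < 0 := by
          have h5 := (hsabs (p.2 - (q J).2)).1
          have h6 : |p.2 - (q J).2| < 1 := lt_of_le_of_lt (hqp2 J) hJ3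
          rw [hsrel]
          linarith
        have H : ∀ δ > 0, ∃ z' ∈ OmegaN n, ‖z'‖ < δ ∧ u z' < s := by
          intro δ hδ
          obtain ⟨j, hj1, hj2, hj3⟩ :=
            (hneg.and ((hUB (|s|)).and (hevzδ δ hδ))).exists
          refine ⟨z j, hzΩ j, hj3, ?_⟩
          have h7 : |s| < -u (z j) := by rwa [_root_.abs_of_neg hj1] at hj2
          have h8 : |s| = -s := _root_.abs_of_neg hsneg
          linarith
        have hgr := vertex_neg hn hu hsneg H
        left
        obtain ⟨g, hgG, hgco⟩ := hgex J
        rw [SigmaSet]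
        apply Set.mem_biUnion hgG
        refine ⟨((0:ℂ), s), ⟨hgr, by simp [DR]⟩, ?_⟩
        rw [hgco]
        show (w * cc σ 0, sg e * s + 2*h*((m J : ℤ):ℝ)) = p
        have h1 : w * cc σ 0 = p.1 := by
          rw [hp10]
          cases σ <;> simp [cc]
        have h2 : sg e * s + 2*h*((m J : ℤ):ℝ) = p.2 := by
          rw [hs, ← mul_assoc, sg_mul_sg, one_mul]
          ring
        rw [h1, h2]

-- ===== Part 8: final assembly =====

lemma sigma_sub_DR {n : ℕ} {h : ℝ} {u : ℂ → ℝ} (hn : 1 ≤ n) :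
    SigmaSet n h u ⊆ DR := by
  intro p hp
  rw [SigmaSet] at hp
  simp only [Set.mem_iUnion] at hp
  obtain ⟨g, hg, x, hx, rfl⟩ := hp
  obtain ⟨w, σ, e, m, hw, hgco⟩ := ggrp_form hn h hg
  show ‖(g x).1‖ < 1
  rw [hgco]
  show ‖w * cc σ x.1‖ < 1
  rw [norm_mul, abs_cc, abs_one_of_pow (show (2*n) ≠ 0 by omega) hw, one_mul]
  exact hx.2

lemma gimage_sigma_sub {n : ℕ} {h : ℝ} {u : ℂ → ℝ} {g : Equiv.Perm (ℂ × ℝ)}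
    (hg : g ∈ Ggrp (alphaN n) h) : ⇑g '' SigmaSet n h u ⊆ SigmaSet n h u := by
  rintro y ⟨t, ht, rfl⟩
  rw [SigmaSet] at ht ⊢
  simp only [Set.mem_iUnion] at ht ⊢
  obtain ⟨g', hg', x', hx', rfl⟩ := ht
  exact ⟨g * g', mul_mem hg hg', x', hx', by rw [Equiv.Perm.coe_mul]; rfl⟩

lemma gplane_sub_closure {n : ℕ} {h : ℝ} {u : ℂ → ℝ} (hn : 1 ≤ n) (hh : 0 < h)
    (hu : FundamentalPiece n h u) {g : Equiv.Perm (ℂ × ℝ)} (hg : g ∈ Ggrp (alphaN n) h) :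
    ⇑g '' planeN n ⊆ closure (SigmaSet n h u) := by
  obtain ⟨w, σ, e, m, hw, hgco⟩ := ggrp_form hn h hg
  have hgc : Continuous ⇑g := by rw [hgco]; exact fmap_cont h w σ e m
  rintro p ⟨x, hx, rfl⟩
  have h1 : g x ∈ ⇑g '' closure (SigmaSet n h u) :=
    ⟨x, plane_sub_closure hn hh hu hx, rfl⟩
  have h2 := image_closure_subset_closure_image (s := SigmaSet n h u) hgc
  exact closure_mono (gimage_sigma_sub hg) (h2 h1)

lemma gplane_sub_DR {n : ℕ} {h : ℝ} (hn : 1 ≤ n) {g : Equiv.Perm (ℂ × ℝ)}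
    (hg : g ∈ Ggrp (alphaN n) h) : ⇑g '' planeN n ⊆ DR := by
  obtain ⟨w, σ, e, m, hw, hgco⟩ := ggrp_form hn h hg
  rintro p ⟨x, hx, rfl⟩
  show ‖(g x).1‖ < 1
  rw [hgco]
  show ‖w * cc σ x.1‖ < 1
  rw [norm_mul, abs_cc, abs_one_of_pow (show (2*n) ≠ 0 by omega) hw, one_mul]
  exact hx.1

lemma sigma_sub_bsets {n : ℕ} {h : ℝ} {u : ℂ → ℝ} (hn : 1 ≤ n) :
    SigmaSet n h u ⊆ ⋃ d ∈ ({w : ℂ | w ^ (2*n) = 1} ×ˢ (Set.univ : Set (Bool × Bool))),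
      closure (Bset n h u d.1 d.2.1 d.2.2) := by
  intro p hp
  rw [SigmaSet] at hp
  simp only [Set.mem_iUnion] at hp
  obtain ⟨g, hg, x, hx, rfl⟩ := hp
  obtain ⟨w, σ, e, m, hw, hgco⟩ := ggrp_form hn h hg
  apply Set.mem_biUnion (show ((w, (σ, e)) : ℂ × Bool × Bool) ∈
    ({w : ℂ | w ^ (2*n) = 1} ×ˢ (Set.univ : Set (Bool × Bool))) from ⟨hw, trivial⟩)
  show g x ∈ closure (Bset n h u w σ e)
  have hgc : Continuous ⇑g := by rw [hgco]; exact fmap_cont h w σ e m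
  have h1 : g x ∈ ⇑g '' closure (graphSet (OmegaN n) u) := ⟨x, hx.1, rfl⟩
  have h2 := image_closure_subset_closure_image (s := graphSet (OmegaN n) u) hgc
  apply closure_mono _ (h2 h1)
  rintro y ⟨t, ht, rfl⟩
  refine ⟨m, t.1, ht.1, ⟨g, hg, hgco⟩, ?_⟩
  rw [hgco]
  congr 1
  exact Prod.ext rfl ht.2

/-- the closure of `Σ(u)` in `𝔻 × ℝ` is the union of `Σ(u)` with the
totally geodesic vertical planes over the `G`-orbit of the ideal geodesic `γ_α`. -/
theorem helicoidalScherk_closure (n : ℕ) (hn : 1 ≤ n) (h : ℝ) (hh : 0 < h)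
    (u : ℂ → ℝ) (hu : FundamentalPiece n h u) :
    closure (SigmaSet n h u) ∩ DR =
      SigmaSet n h u ∪ ⋃ g ∈ Ggrp (alphaN n) h, ⇑g '' planeN n := by
  have hSfin : (({w : ℂ | w ^ (2*n) = 1} ×ˢ (Set.univ : Set (Bool × Bool)))).Finite := by
    apply Set.Finite.prod _ Set.finite_univ
    apply Set.Finite.subset (Polynomial.nthRootsFinset (2*n) (1:ℂ)).finite_toSet
    intro x hx
    exact Finset.mem_coe.mpr ((Polynomial.mem_nthRootsFinset (by omega : 0 < 2*n) (1:ℂ)).mpr hx)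
  apply subset_antisymm
  · rintro p ⟨hpc, hpDR⟩
    have hclos : closure (SigmaSet n h u) ⊆
        ⋃ d ∈ ({w : ℂ | w ^ (2*n) = 1} ×ˢ (Set.univ : Set (Bool × Bool))),
          closure (Bset n h u d.1 d.2.1 d.2.2) := by
      calc closure (SigmaSet n h u)
          ⊆ closure (⋃ d ∈ ({w : ℂ | w ^ (2*n) = 1} ×ˢ (Set.univ : Set (Bool × Bool))),
            closure (Bset n h u d.1 d.2.1 d.2.2)) := closure_mono (sigma_sub_bsets hn)
        _ = ⋃ d ∈ ({w : ℂ | w ^ (2*n) = 1} ×ˢ (Set.univ : Set (Bool × Bool))),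
            closure (closure (Bset n h u d.1 d.2.1 d.2.2)) :=
          Set.Finite.closure_biUnion hSfin _
        _ = ⋃ d ∈ ({w : ℂ | w ^ (2*n) = 1} ×ˢ (Set.univ : Set (Bool × Bool))),
            closure (Bset n h u d.1 d.2.1 d.2.2) := by simp only [closure_closure]
    have hmem := hclos hpc
    simp only [Set.mem_iUnion] at hmem
    obtain ⟨d, hdS, hdp⟩ := hmem
    exact closure_Bset_sub hn hh hu hdS.1 hdp hpDR
  · intro p hp
    rcases hp with hp | hp
    · exact ⟨subset_closure hp, sigma_sub_DR hn hp⟩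
    · simp only [Set.mem_iUnion] at hp
      obtain ⟨g, hg, hpg⟩ := hp
      exact ⟨gplane_sub_closure hn hh hu hg hpg, gplane_sub_DR hn hg hpg⟩
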